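/- For every pair Φ = (u,v) ∈ C_γ^−, the integral K_B^ε(Φ)(t) := ∫_{−∞}^t e^{B(t−s)} g(u(s)+η(s), v(s)+ξ(s)) ds converges absolutely for every t ≤ 0, defines a continuous function on (−∞,0], and satisfies ‖K_B^ε(Φ)‖_γ^− ≤ C_B + (L_g/(γ_B − γ))·‖Φ‖_γ^−, where C_B := L_g C_g/γ_B + (L_g/(γ_B − γ))(‖η‖_γ^− + ‖ξ‖_γ^−). -/

import Mathlib

open MeasureTheory Set Filter

noncomputable section

/-- `ℝ^n` with the Euclidean norm. -/
abbrev Vec (n : ℕ) := EuclideanSpace ℝ (Fin n)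

/-- Action of an `n × n` real matrix on `ℝ^n`. -/
noncomputable def mApply {n : ℕ} (M : Matrix (Fin n) (Fin n) ℝ) (x : Vec n) : Vec n :=
  Matrix.toEuclideanLin M x

/-- The matrix exponential `e^{tA}`. -/
noncomputable def expM {n : ℕ} (A : Matrix (Fin n) (Fin n) ℝ) (t : ℝ) :
    Matrix (Fin n) (Fin n) ℝ :=
  NormedSpace.exp (t • A)

/-- The norm `‖u‖_γ^- = sup_{t ≤ 0} e^{γ t} ‖u t‖` on `C_γ^-`. -/
noncomputable def cNorm {n : ℕ} (γ : ℝ) (u : ℝ → Vec n) : ℝ :=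
  sSup ((fun t => Real.exp (γ * t) * ‖u t‖) '' Iic (0:ℝ))

/-- Membership in the Banach space `C_γ^-`: continuity on `(-∞, 0]` together with
finiteness of the norm `sup_{t ≤ 0} e^{γ t} ‖u t‖`. -/
def memCneg {n : ℕ} (γ : ℝ) (u : ℝ → Vec n) : Prop :=
  ContinuousOn u (Iic 0) ∧
    BddAbove ((fun t => Real.exp (γ * t) * ‖u t‖) '' Iic (0:ℝ))

/-- The `A`-component of the Lyapunov–Perron map:
`K_A^ε(Φ)(t) = e^{εAt} u₀ + ε ∫_0^t e^{εA(t-s)} f(u(s)+η(s), v(s)+ξ(s)) ds`. -/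
noncomputable def KA {n : ℕ} (A : Matrix (Fin n) (Fin n) ℝ) (ε : ℝ) (u₀ : Vec n)
    (f : Vec n → Vec n → Vec n) (η ξ u v : ℝ → Vec n) (t : ℝ) : Vec n :=
  mApply (expM A (ε * t)) u₀ +
    ε • ∫ s in (0:ℝ)..t, mApply (expM A (ε * (t - s))) (f (u s + η s) (v s + ξ s))

/-- The `B`-component of the Lyapunov–Perron map:
`K_B^ε(Φ)(t) = ∫_{-∞}^t e^{B(t-s)} g(u(s)+η(s), v(s)+ξ(s)) ds`. -/
noncomputable def KB {n : ℕ} (B : Matrix (Fin n) (Fin n) ℝ)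
    (g : Vec n → Vec n → Vec n) (η ξ u v : ℝ → Vec n) (t : ℝ) : Vec n :=
  ∫ s in Iic t, mApply (expM B (t - s)) (g (u s + η s) (v s + ξ s))

/-! Substituting `s = t - r` turns `K_B` into `∫_{r ≥ 0} e^{Br} G(t - r) dr` with
`G(s) = g(u(s)+η(s), v(s)+ξ(s))`. With `M` the sum of the four weighted norms, the growth bound
on `g` gives `|G(s)| ≤ L_g C_g + L_g M e^{-γ s}` for `s ≤ 0`, so the integrand is dominated by
`e^{-γ_B r} (L_g C_g + L_g M e^{-γ t} e^{γ r})`, which is integrable because `γ < γ_B`;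
integrating it gives the bound. For `t` in a window `[t₀ - 1, 0]` the majorant at `t₀ - 1`
dominates all the integrands at once, so dominated convergence gives continuity. -/

open Real Topology

section Majorant

def expMajorant (κ γ a b t r : ℝ) : ℝ :=
  exp (-κ * r) * (a + b * exp (-γ * (t - r)))

variable {κ γ a b : ℝ}

lemma expMajorant_eq (t r : ℝ) :
    expMajorant κ γ a b t r = a * exp (-κ * r) + b * exp (-γ * t) * exp ((γ - κ) * r) := by
  have h : exp (-κ * r) * exp (-γ * (t - r)) = exp (-γ * t) * exp ((γ - κ) * r) := by
    rw [← exp_add, ← exp_add]; ring_nf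
  rw [expMajorant, mul_add, mul_left_comm, h]; ring

lemma integrableOn_exp_mul_Ici {c : ℝ} (hc : c < 0) :
    IntegrableOn (fun r => exp (c * r)) (Ici 0) := by
  rw [integrableOn_Ici_iff_integrableOn_Ioi]
  exact integrableOn_exp_mul_Ioi hc 0

lemma integral_exp_mul_Ici {c : ℝ} (hc : c < 0) : ∫ r in Ici 0, exp (c * r) = -c⁻¹ := by
  rw [integral_Ici_eq_integral_Ioi, integral_exp_mul_Ioi hc, mul_zero, exp_zero, neg_div, one_div]

lemma integrableOn_expMajorant (hκ : 0 < κ) (hγκ : γ < κ) (t : ℝ) :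
    IntegrableOn (expMajorant κ γ a b t) (Ici 0) := by
  simp_rw [funext (expMajorant_eq t)]
  exact ((integrableOn_exp_mul_Ici (by linarith)).const_mul a).add
    ((integrableOn_exp_mul_Ici (by linarith)).const_mul _)

lemma integral_expMajorant (hκ : 0 < κ) (hγκ : γ < κ) (t : ℝ) :
    ∫ r in Ici 0, expMajorant κ γ a b t r = a / κ + b / (κ - γ) * exp (-γ * t) := by
  simp_rw [funext (expMajorant_eq t)]
  rw [integral_add ((integrableOn_exp_mul_Ici (by linarith)).const_mul a)
      ((integrableOn_exp_mul_Ici (by linarith)).const_mul _),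
    integral_const_mul, integral_const_mul, integral_exp_mul_Ici (by linarith),
    integral_exp_mul_Ici (by linarith), ← neg_sub κ γ, inv_neg, inv_neg, neg_neg, neg_neg]
  ring

lemma expMajorant_anti_left (hγ : 0 ≤ γ) (hb : 0 ≤ b) {T t : ℝ} (hTt : T ≤ t) (r : ℝ) :
    expMajorant κ γ a b t r ≤ expMajorant κ γ a b T r := by
  unfold expMajorant
  gcongr _ * (_ + _ * exp ?_)
  nlinarith

end Majorant

section Convolution

variable {E : Type*} [NormedAddCommGroup E] {S : ℝ → E → E} {G : ℝ → E}
  {κ γ a b : ℝ}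

lemma norm_apply_comp_sub_le_expMajorant (hSle : ∀ r ≥ 0, ∀ x, ‖S r x‖ ≤ exp (-κ * r) * ‖x‖)
    (hGle : ∀ s ≤ 0, ‖G s‖ ≤ a + b * exp (-γ * s)) {t r : ℝ} (ht : t ≤ 0) (hr : 0 ≤ r) :
    ‖S r (G (t - r))‖ ≤ expMajorant κ γ a b t r :=
  (hSle r hr _).trans (mul_le_mul_of_nonneg_left (hGle _ (by linarith)) (exp_pos _).le)

lemma continuousOn_apply_comp_sub (hS : Continuous (Function.uncurry S))
    (hG : ContinuousOn G (Iic 0)) {t : ℝ} (ht : t ≤ 0) :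
    ContinuousOn (fun r => S r (G (t - r))) (Ici 0) :=
  hS.comp_continuousOn <| continuousOn_id.prodMk <|
    hG.comp (continuousOn_const.sub continuousOn_id) fun r (hr : 0 ≤ r) =>
      show t - r ≤ 0 by linarith

lemma integrableOn_apply_comp_sub (hS : Continuous (Function.uncurry S))
    (hSle : ∀ r ≥ 0, ∀ x, ‖S r x‖ ≤ exp (-κ * r) * ‖x‖) (hG : ContinuousOn G (Iic 0))
    (hGle : ∀ s ≤ 0, ‖G s‖ ≤ a + b * exp (-γ * s)) (hκ : 0 < κ) (hγκ : γ < κ) {t : ℝ}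
    (ht : t ≤ 0) : IntegrableOn (fun r => S r (G (t - r))) (Ici 0) :=
  (integrableOn_expMajorant hκ hγκ t).mono'
    ((continuousOn_apply_comp_sub hS hG ht).aestronglyMeasurable measurableSet_Ici)
    ((ae_restrict_iff' measurableSet_Ici).2 <| ae_of_all _ fun _ hr =>
      norm_apply_comp_sub_le_expMajorant hSle hGle ht hr)

variable [NormedSpace ℝ E]

lemma norm_integral_apply_comp_sub_le (hSle : ∀ r ≥ 0, ∀ x, ‖S r x‖ ≤ exp (-κ * r) * ‖x‖)
    (hGle : ∀ s ≤ 0, ‖G s‖ ≤ a + b * exp (-γ * s)) (hκ : 0 < κ) (hγκ : γ < κ) {t : ℝ}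
    (ht : t ≤ 0) :
    ‖∫ r in Ici 0, S r (G (t - r))‖ ≤ a / κ + b / (κ - γ) * exp (-γ * t) := by
  rw [← integral_expMajorant hκ hγκ t]
  exact norm_integral_le_of_norm_le (integrableOn_expMajorant hκ hγκ t)
    ((ae_restrict_iff' measurableSet_Ici).2 <| ae_of_all _ fun _ hr =>
      norm_apply_comp_sub_le_expMajorant hSle hGle ht hr)

lemma continuousOn_integral_apply_comp_sub (hS : Continuous (Function.uncurry S))
    (hSle : ∀ r ≥ 0, ∀ x, ‖S r x‖ ≤ exp (-κ * r) * ‖x‖) (hG : ContinuousOn G (Iic 0))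
    (hGle : ∀ s ≤ 0, ‖G s‖ ≤ a + b * exp (-γ * s)) (hκ : 0 < κ) (hγκ : γ < κ) (hγ : 0 ≤ γ)
    (hb : 0 ≤ b) : ContinuousOn (fun t => ∫ r in Ici 0, S r (G (t - r))) (Iic 0) := by
  intro t₀ ht₀
  have hwindow : ContinuousOn (fun t => ∫ r in Ici 0, S r (G (t - r))) (Icc (t₀ - 1) 0) := by
    refine continuousOn_of_dominated (bound := expMajorant κ γ a b (t₀ - 1))
      (fun t ht => ?_) (fun t ht => ?_) (integrableOn_expMajorant hκ hγκ _) ?_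
    · exact (continuousOn_apply_comp_sub hS hG ht.2).aestronglyMeasurable measurableSet_Ici
    · refine (ae_restrict_iff' measurableSet_Ici).2 <| ae_of_all _ fun r hr => ?_
      exact (norm_apply_comp_sub_le_expMajorant hSle hGle ht.2 hr).trans
        (expMajorant_anti_left hγ hb ht.1 r)
    · refine (ae_restrict_iff' measurableSet_Ici).2 <| ae_of_all _ fun r (hr : 0 ≤ r) => ?_
      exact hS.comp_continuousOn <| continuousOn_const.prodMk <|
        hG.comp (continuousOn_id.sub continuousOn_const) fun t ht =>
          show t - r ≤ 0 by linarith [ht.2]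
  have hmem : Icc (t₀ - 1) 0 ∈ 𝓝[Iic 0] t₀ :=
    mem_of_superset (inter_mem_nhdsWithin (Iic 0) (Ioi_mem_nhds (sub_one_lt t₀)))
      fun t ht => ⟨ht.2.le, ht.1⟩
  exact (hwindow t₀ ⟨(sub_one_lt t₀).le, ht₀⟩).mono_of_mem_nhdsWithin hmem

end Convolution

section Reflection

variable {E : Type*} [NormedAddCommGroup E]

lemma integrableOn_Iic_iff_integrableOn_Ici_sub {f : ℝ → E} (t : ℝ) :
    IntegrableOn f (Iic t) ↔ IntegrableOn (fun r => f (t - r)) (Ici 0) := by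
  rw [← (Measure.measurePreserving_sub_left volume t).integrableOn_comp_preimage
    (Homeomorph.subLeft t).measurableEmbedding]
  simp [Function.comp_def]

lemma setIntegral_Iic_eq_setIntegral_Ici_sub [NormedSpace ℝ E] (f : ℝ → E) (t : ℝ) :
    ∫ s in Iic t, f s = ∫ r in Ici 0, f (t - r) := by
  rw [← (Measure.measurePreserving_sub_left volume t).setIntegral_preimage_emb
    (Homeomorph.subLeft t).measurableEmbedding]
  simp

end Reflection

section WeightedSup

variable {n : ℕ} {γ : ℝ} {w : ℝ → Vec n}

lemma cNorm_nonneg (hw : memCneg γ w) : 0 ≤ cNorm γ w :=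
  (norm_nonneg _).trans <| by simpa [cNorm] using le_csSup hw.2 ⟨0, self_mem_Iic, rfl⟩

lemma norm_le_exp_mul_cNorm (hw : memCneg γ w) {s : ℝ} (hs : s ≤ 0) :
    ‖w s‖ ≤ exp (-γ * s) * cNorm γ w := by
  rw [neg_mul, exp_neg, inv_mul_eq_div, le_div_iff₀' (exp_pos _)]
  exact le_csSup hw.2 ⟨s, hs, rfl⟩

end WeightedSup

lemma continuous_mApply {n : ℕ} :
    Continuous fun p : Matrix (Fin n) (Fin n) ℝ × Vec n => mApply p.1 p.2 := by
  simp only [mApply, Matrix.toLpLin_apply]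
  fun_prop

section
attribute [local instance] Matrix.linftyOpNormedRing Matrix.linftyOpNormedAlgebra

lemma continuous_expM {n : ℕ} (B : Matrix (Fin n) (Fin n) ℝ) : Continuous (expM B) :=
  NormedSpace.exp_continuous.comp (continuous_id.smul continuous_const)

end

lemma continuous_uncurry_of_norm_sub_le {E F : Type*} [SeminormedAddCommGroup E]
    [SeminormedAddCommGroup F] {g : E → E → F} {L : ℝ}
    (hg : ∀ x₁ y₁ x₂ y₂, ‖g x₁ y₁ - g x₂ y₂‖ ≤ L * (‖x₁ - x₂‖ + ‖y₁ - y₂‖)) :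
    Continuous (Function.uncurry g) :=
  (LipschitzWith.uncurry
    (fun y => LipschitzWith.of_dist_le' fun x₁ x₂ => by simpa [dist_eq_norm] using hg x₁ y x₂ y)
    (fun x => LipschitzWith.of_dist_le' fun y₁ y₂ => by
      simpa [dist_eq_norm] using hg x y₁ x y₂)).continuous

lemma norm_apply_add_le_of_memCneg {n : ℕ} {g : Vec n → Vec n → Vec n} {L C γ : ℝ} (hL : 0 ≤ L)
    (hgGrow : ∀ x y : Vec n, ‖g x y‖ ≤ L * (C + ‖x‖ + ‖y‖)) {η ξ u v : ℝ → Vec n}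
    (hη : memCneg γ η) (hξ : memCneg γ ξ) (hu : memCneg γ u) (hv : memCneg γ v) {s : ℝ}
    (hs : s ≤ 0) :
    ‖g (u s + η s) (v s + ξ s)‖ ≤
      L * C + L * (cNorm γ η + cNorm γ ξ + (cNorm γ u + cNorm γ v)) * exp (-γ * s) :=
  calc ‖g (u s + η s) (v s + ξ s)‖
      ≤ L * (C + (‖u s‖ + ‖η s‖) + (‖v s‖ + ‖ξ s‖)) := by
        grw [hgGrow, norm_add_le (u s), norm_add_le (v s)]
    _ ≤ L * (C + (exp (-γ * s) * cNorm γ u + exp (-γ * s) * cNorm γ η) +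
          (exp (-γ * s) * cNorm γ v + exp (-γ * s) * cNorm γ ξ)) := by
        grw [norm_le_exp_mul_cNorm hu hs, norm_le_exp_mul_cNorm hη hs,
          norm_le_exp_mul_cNorm hv hs, norm_le_exp_mul_cNorm hξ hs]
    _ = _ := by ring

lemma exp_mul_le_add_of_le_add_mul_exp {γ t x c d : ℝ} (hγ : 0 ≤ γ) (ht : t ≤ 0) (hc : 0 ≤ c)
    (h : x ≤ c + d * exp (-γ * t)) : exp (γ * t) * x ≤ c + d :=
  calc exp (γ * t) * x ≤ exp (γ * t) * (c + d * exp (-γ * t)) := by grw [h]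
    _ = exp (γ * t) * c + d := by rw [neg_mul, exp_neg]; field_simp
    _ ≤ c + d := by
        grw [mul_le_of_le_one_left hc (exp_le_one_iff.2 (mul_nonpos_of_nonneg_of_nonpos hγ ht))]

theorem statement1_general
    (n : ℕ)
    (B : Matrix (Fin n) (Fin n) ℝ) (γB : ℝ) (hγB : 0 < γB)
    (hB : ∀ t ≥ (0:ℝ), ∀ y : Vec n, ‖mApply (expM B t) y‖ ≤ Real.exp (-γB * t) * ‖y‖)
    (γ : ℝ) (hγ : 0 < γ) (hγγB : γ < γB)
    (g : Vec n → Vec n → Vec n) (Lg Cg : ℝ) (hLg : 0 < Lg) (hCg : 0 < Cg)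
    (hgLip : ∀ x₁ y₁ x₂ y₂ : Vec n,
      ‖g x₁ y₁ - g x₂ y₂‖ ≤ Lg * (‖x₁ - x₂‖ + ‖y₁ - y₂‖))
    (hgGrow : ∀ x y : Vec n, ‖g x y‖ ≤ Lg * (Cg + ‖x‖ + ‖y‖))
    (η ξ : ℝ → Vec n) (hη : memCneg γ η) (hξ : memCneg γ ξ)
    (u v : ℝ → Vec n) (hu : memCneg γ u) (hv : memCneg γ v) :
    (∀ t ≤ (0:ℝ),
        IntegrableOn (fun s => mApply (expM B (t - s)) (g (u s + η s) (v s + ξ s)))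
          (Iic t) volume) ∧
      ContinuousOn (KB B g η ξ u v) (Iic 0) ∧
      ∀ t ≤ (0:ℝ),
        Real.exp (γ * t) * ‖KB B g η ξ u v t‖ ≤
          (Lg * Cg / γB + Lg / (γB - γ) * (cNorm γ η + cNorm γ ξ)) +
            Lg / (γB - γ) * (cNorm γ u + cNorm γ v) := by
  set G := fun s => g (u s + η s) (v s + ξ s)
  have hS : Continuous (Function.uncurry fun r x => mApply (expM B r) x) :=
    continuous_mApply.comp ((continuous_expM B).prodMap continuous_id)
  have hG : ContinuousOn G (Iic 0) := (continuous_uncurry_of_norm_sub_le hgLip).comp_continuousOn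
    ((hu.1.add hη.1).prodMk (hv.1.add hξ.1))
  have hGle := fun s (hs : s ≤ 0) => norm_apply_add_le_of_memCneg hLg.le hgGrow hη hξ hu hv hs
  have hKB : KB B g η ξ u v = fun t => ∫ r in Ici 0, mApply (expM B r) (G (t - r)) := by
    ext1 t
    rw [KB, setIntegral_Iic_eq_setIntegral_Ici_sub]
    simp only [sub_sub_cancel, G]
  have hb : 0 ≤ Lg * (cNorm γ η + cNorm γ ξ + (cNorm γ u + cNorm γ v)) :=
    mul_nonneg hLg.le <| add_nonneg (add_nonneg (cNorm_nonneg hη) (cNorm_nonneg hξ))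
      (add_nonneg (cNorm_nonneg hu) (cNorm_nonneg hv))
  refine ⟨fun t ht => ?_, ?_, fun t ht => ?_⟩
  · rw [integrableOn_Iic_iff_integrableOn_Ici_sub]
    simpa only [sub_sub_cancel] using integrableOn_apply_comp_sub hS hB hG hGle hγB hγγB ht
  · rw [hKB]
    exact continuousOn_integral_apply_comp_sub hS hB hG hGle hγB hγγB hγ.le hb
  · rw [hKB]
    refine (exp_mul_le_add_of_le_add_mul_exp hγ.le ht (by positivity)
      (norm_integral_apply_comp_sub_le hB hGle hγB hγγB ht)).trans_eq ?_
    ring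

/-- absolute convergence, continuity and bound for the `B`-component of
the Lyapunov–Perron map on `C_γ^-`. -/
theorem statement1
    (n : ℕ) (hn : 0 < n)
    (B : Matrix (Fin n) (Fin n) ℝ) (γB : ℝ) (hγB : 0 < γB)
    (hB : ∀ t ≥ (0:ℝ), ∀ y : Vec n, ‖mApply (expM B t) y‖ ≤ Real.exp (-γB * t) * ‖y‖)
    (γ ε : ℝ) (hγ : 0 < γ) (hγγB : γ < γB) (hε : 0 < ε)
    (g : Vec n → Vec n → Vec n) (Lg Cg : ℝ) (hLg : 0 < Lg) (hCg : 0 < Cg)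
    (hgLip : ∀ x₁ y₁ x₂ y₂ : Vec n,
      ‖g x₁ y₁ - g x₂ y₂‖ ≤ Lg * (‖x₁ - x₂‖ + ‖y₁ - y₂‖))
    (hgGrow : ∀ x y : Vec n, ‖g x y‖ ≤ Lg * (Cg + ‖x‖ + ‖y‖))
    (η ξ : ℝ → Vec n) (hη : memCneg γ η) (hξ : memCneg γ ξ)
    (u v : ℝ → Vec n) (hu : memCneg γ u) (hv : memCneg γ v) :
    (∀ t ≤ (0:ℝ),
        IntegrableOn (fun s => mApply (expM B (t - s)) (g (u s + η s) (v s + ξ s)))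
          (Iic t) volume) ∧
      ContinuousOn (KB B g η ξ u v) (Iic 0) ∧
      ∀ t ≤ (0:ℝ),
        Real.exp (γ * t) * ‖KB B g η ξ u v t‖ ≤
          (Lg * Cg / γB + Lg / (γB - γ) * (cNorm γ η + cNorm γ ξ)) +
            Lg / (γB - γ) * (cNorm γ u + cNorm γ v) :=
  statement1_general n B γB hγB hB γ hγ hγγB g Lg Cg hLg hCg hgLip hgGrow η ξ hη hξ u v hu hv
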